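/- For every signal f, MTL formulas φ1 and φ2, and nonempty bounded interval I of nonnegative reals with inf I > 0, there exist four intervals T1, T2, T3, T4 ⊆ ℝ≥0 such that: (a) for all i < j in {1,2,3,4} and all ti ∈ Ti, tj ∈ Tj, ti < tj; and (b) for all t ∈ ℝ≥0, (t < Step(I) and f^t ⊨ φ1 R_I φ2 under the new satisfaction relation) if and only if t ∈ T1 ∪ T2 ∪ T3 ∪ T4. -/

import Mathlib

open scoped NNReal ENNReal
open Set

namespace MITL

/-- A signal assigns to each nonnegative real time the set of atomic
propositions true at that time. -/
abbrev Signal (AP : Type*) := ℝ≥0 → Set AP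

/-- The shifted signal `f^r`, defined by `f^r(t) = f(r+t)`. -/
def shift {AP : Type*} (f : Signal AP) (r : ℝ≥0) : Signal AP := fun t => f (r + t)

/-- MTL formulas over atomic propositions `AP`; the timing constraints are
(intended to be) intervals of nonnegative reals. -/
inductive MTL (AP : Type*) where
  | top : MTL AP
  | bot : MTL AP
  | atom : AP → MTL AP
  | neg : MTL AP → MTL AP
  | disj : MTL AP → MTL AP → MTL AP
  | conj : MTL AP → MTL AP → MTL AP
  | until_ : MTL AP → MTL AP → Set ℝ≥0 → MTL AP
  | release : MTL AP → MTL AP → Set ℝ≥0 → MTL AP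

variable {AP : Type*}

/-- The NEW satisfaction relation: `NSat f φ` means `f ⊨ φ`. -/
def NSat : Signal AP → MTL AP → Prop
  | _, .top => True
  | _, .bot => False
  | f, .atom p => p ∈ f 0
  | f, .neg φ => ¬ NSat f φ
  | f, .disj φ1 φ2 => NSat f φ1 ∨ NSat f φ2
  | f, .conj φ1 φ2 => NSat f φ1 ∧ NSat f φ2
  | f, .until_ φ1 φ2 I =>
      ∃ t1 ∈ I, NSat (shift f t1) φ2 ∧ ∀ t2 ∈ Set.Ioo 0 t1, NSat (shift f t2) φ1
  | f, .release φ1 φ2 I =>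
      (∀ t1 ∈ I, NSat (shift f t1) φ2) ∨
      (∃ t1 : ℝ≥0, 0 < t1 ∧ NSat (shift f t1) φ1 ∧
        ∀ t2 ∈ Set.Ioc 0 t1 ∩ I, NSat (shift f t2) φ2) ∨
      (∃ t1 ∈ I ∪ {sInf I}, ∃ t2 ∈ I, t1 < t2 ∧
        ∀ t3 ∈ I, (t3 ≤ t1 → NSat (shift f t3) φ2) ∧
          (t1 < t3 → t3 ≤ t2 → NSat (shift f t3) φ1))

/-- Finite variability from the right of a signal `f` with respect to a formula
`φ`, relative to a satisfaction relation `Sat`. -/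
def FinVarRight (Sat : Signal AP → MTL AP → Prop) (f : Signal AP) (φ : MTL AP) : Prop :=
  ∀ r : ℝ≥0,
    (∀ ε : ℝ≥0, 0 < ε → ∃ t ∈ Set.Ioo r (r + ε), Sat (shift f t) φ) →
    ∃ ε : ℝ≥0, 0 < ε ∧ ∀ t ∈ Set.Ioo r (r + ε), Sat (shift f t) φ

/-- Finite variability from the left of a signal `f` with respect to a formula
`φ`, relative to a satisfaction relation `Sat`. -/
def FinVarLeft (Sat : Signal AP → MTL AP → Prop) (f : Signal AP) (φ : MTL AP) : Prop :=
  ∀ r : ℝ≥0, 0 < r →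
    (∀ ε ∈ Set.Ioo 0 r, ∃ t ∈ Set.Ioo (r - ε) r, Sat (shift f t) φ) →
    ∃ ε ∈ Set.Ioo 0 r, ∀ t ∈ Set.Ioo (r - ε) r, Sat (shift f t) φ

open Classical in
/-- The step size of a (bounded nonempty) interval. -/
noncomputable def Step (I : Set ℝ≥0) : ℝ≥0 :=
  if sSup I - sInf I < sInf I then sSup I - sInf I else sInf I

/-!
Let `S` be the set of `t < Step I` at which `φ1 R_I φ2` holds. It suffices to exclude a pattern
`n₁ < x₂ < n₂ < x₃` with `x₂, x₃ ∈ S` and `n₁, n₂ ∉ S`: then the points of `S` reached before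
its first gap form one order-connected piece and the rest of `S` another.

For a time `n` where the release fails let `n + σ` be the first (infimum) failure of `φ2` in the
window `n + I`. If the release holds at `x` and `φ1` is false on `(x, n]`, then `n + σ` cannot
lie strictly inside the window `x + I`: the failures of `φ2` near `n + σ` then fall into `x + I`
before any point of `φ1` after `x`, which refutes each of the three clauses at `x`. Since the
release fails at `n₁`, `φ1` is false on `(n₁, n₁ + inf I)`, which contains `(x₂, n₂]`. Applied to
`x = x₃ > n₂` and to `x = x₂ < n₂` this gives `x₂ + sup I ≤ n₂ + σ ≤ x₃ + inf I`, i.e.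
`sup I - inf I ≤ x₃ - x₂ < Step I`, contradicting the definition of `Step`.
-/

lemma shift_shift (f : Signal AP) (r s : ℝ≥0) : shift (shift f r) s = shift f (r + s) := by
  funext t
  simp [shift, add_assoc]

section OrdConnected

variable {α : Type*} [ConditionallyCompleteLinearOrder α] {I : Set α} {s t : α}

theorem _root_.Set.OrdConnected.mem_of_csInf_lt_of_le (hI : I.OrdConnected) (hs : sInf I < s)
    (hst : s ≤ t) (ht : t ∈ I) : s ∈ I := by
  obtain ⟨z, hz, hzs⟩ := exists_lt_of_csInf_lt ⟨t, ht⟩ hs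
  exact hI.out hz ht ⟨hzs.le, hst⟩

theorem _root_.Set.OrdConnected.mem_of_csInf_lt_of_lt_csSup (hI : I.OrdConnected)
    (hne : I.Nonempty) (hs : sInf I < s) (hs' : s < sSup I) : s ∈ I := by
  obtain ⟨t, ht, hst⟩ := exists_lt_of_lt_csSup hne hs'
  exact hI.mem_of_csInf_lt_of_le hs hst.le ht

theorem _root_.Set.OrdConnected.csInf_mem_of_subset (hI : I.OrdConnected) (hbdd : BddBelow I)
    {T : Set α} (hT : T ⊆ I) (hTne : T.Nonempty) : sInf T ∈ I ∪ {sInf I} := by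
  obtain ⟨t, ht⟩ := hTne
  rcases (le_csInf ⟨t, ht⟩ fun u hu => csInf_le hbdd (hT hu)).eq_or_lt with h | h
  · exact Or.inr h.symm
  · exact Or.inl (hI.mem_of_csInf_lt_of_le h (csInf_le (hbdd.mono hT) ht) (hT ht))

end OrdConnected

theorem exists_ordConnected_union_of_no_alternation {α : Type*} [LinearOrder α] {S : Set α}
    (hS : ∀ ⦃n₁ x₂ n₂ x₃ : α⦄, n₁ < x₂ → x₂ < n₂ → n₂ < x₃ → x₂ ∈ S → x₃ ∈ S →
      n₁ ∈ S ∨ n₂ ∈ S) :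
    ∃ A B : Set α, A.OrdConnected ∧ B.OrdConnected ∧ (∀ a ∈ A, ∀ b ∈ B, a < b) ∧
      S = A ∪ B := by
  set A := {t ∈ S | ∀ s ∈ S, Icc s t ⊆ S}
  have hA_lower : ∀ ⦃t t'⦄, t ∈ A → t' ∈ S → t' ≤ t → t' ∈ A :=
    fun t t' ht ht' h => ⟨ht', fun s hs => (Icc_subset_Icc_right h).trans (ht.2 s hs)⟩
  refine ⟨A, S \ A, ⟨fun t₁ h₁ t₂ h₂ z hz => hA_lower h₂ (h₂.2 t₁ h₁.1 hz) hz.2⟩, ⟨?_⟩,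
    fun a ha b hb => lt_of_not_ge fun h => hb.2 (hA_lower ha hb.1 h),
    (union_sdiff_cancel fun t ht => ht.1).symm⟩
  rintro t₁ ⟨h₁S, h₁A⟩ t₂ ⟨h₂S, -⟩ z hz
  obtain ⟨s, hs, n, hn, hnS⟩ : ∃ s ∈ S, ∃ n ∈ Icc s t₁, n ∉ S := by
    simpa [A, h₁S, not_subset] using h₁A
  have hzS : z ∈ S := by
    by_contra hzS
    have hnt₁ : n < t₁ := hn.2.lt_of_ne (by rintro rfl; exact hnS h₁S)
    have ht₁z : t₁ < z := hz.1.lt_of_ne (by rintro rfl; exact hzS h₁S)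
    have hzt₂ : z < t₂ := hz.2.lt_of_ne (by rintro rfl; exact hzS h₂S)
    exact (hS hnt₁ ht₁z hzt₂ h₁S h₂S).elim hnS hzS
  exact ⟨hzS, fun hzA => hnS (hzA.2 s hs ⟨hn.1, hn.2.trans hz.1⟩)⟩

def Release (P₁ P₂ : ℝ≥0 → Prop) (I : Set ℝ≥0) (x : ℝ≥0) : Prop :=
  (∀ s ∈ I, P₂ (x + s)) ∨
  (∃ t₁, 0 < t₁ ∧ P₁ (x + t₁) ∧ ∀ s ∈ Ioc 0 t₁ ∩ I, P₂ (x + s)) ∨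
  (∃ t₁ ∈ I ∪ {sInf I}, ∃ t₂ ∈ I, t₁ < t₂ ∧
    ∀ s ∈ I, (s ≤ t₁ → P₂ (x + s)) ∧ (t₁ < s → s ≤ t₂ → P₁ (x + s)))

theorem nsat_release_iff (f : Signal AP) (φ1 φ2 : MTL AP) (I : Set ℝ≥0) (x : ℝ≥0) :
    NSat (shift f x) (.release φ1 φ2 I) ↔
      Release (fun t => NSat (shift f t) φ1) (fun t => NSat (shift f t) φ2) I x := by
  simp only [NSat, Release, shift_shift]

def failSet (P₂ : ℝ≥0 → Prop) (I : Set ℝ≥0) (n : ℝ≥0) : Set ℝ≥0 := {s ∈ I | ¬P₂ (n + s)}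

theorem exists_mem_add_eq {I : Set ℝ≥0} (hI : I.OrdConnected) (hne : I.Nonempty) {x q : ℝ≥0}
    (hq : q ∈ Ioo (x + sInf I) (x + sSup I)) : ∃ s ∈ I, sInf I < s ∧ x + s = q := by
  obtain ⟨s, rfl⟩ := exists_add_of_le (le_self_add.trans hq.1.le)
  have hs := lt_of_add_lt_add_left hq.1
  exact ⟨s, hI.mem_of_csInf_lt_of_lt_csSup hne hs (lt_of_add_lt_add_left hq.2), hs, rfl⟩

theorem exists_add_lt_of_add_csInf_lt {F : Set ℝ≥0} (hF : F.Nonempty) {n c : ℝ≥0}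
    (h : n + sInf F < c) : ∃ u ∈ F, n + u < c := by
  obtain ⟨u, hu, hlt⟩ := exists_lt_of_csInf_lt hF (lt_tsub_iff_left.mpr h)
  exact ⟨u, hu, lt_tsub_iff_left.mp hlt⟩

section Release

variable {P₁ P₂ : ℝ≥0 → Prop} {I : Set ℝ≥0} {n x : ℝ≥0}

theorem failSet_nonempty (hn : ¬Release P₁ P₂ I n) : (failSet P₂ I n).Nonempty := by
  simp only [Release, not_or, not_forall] at hn
  obtain ⟨s, hs, h⟩ := hn.1
  exact ⟨s, hs, h⟩

theorem exists_failSet_add_le (hn : ¬Release P₁ P₂ I n) {w : ℝ≥0} (hnw : n < w) (hw : P₁ w) :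
    ∃ u ∈ failSet P₂ I n, n + u ≤ w := by
  obtain ⟨t, rfl⟩ := exists_add_of_le hnw.le
  by_contra! h
  refine hn (Or.inr (Or.inl ⟨t, pos_of_lt_add_right hnw, hw, fun s hs => ?_⟩))
  by_contra hP
  exact (h s ⟨hs.2, hP⟩).not_ge (add_le_add_right hs.1.2 n)

theorem add_csInf_le_of_not_release (hn : ¬Release P₁ P₂ I n) {w : ℝ≥0} (hnw : n < w)
    (hw : P₁ w) : n + sInf I ≤ w := by
  obtain ⟨u, hu, hle⟩ := exists_failSet_add_le hn hnw hw
  exact (add_le_add_right (csInf_le (OrderBot.bddBelow I) hu.1) n).trans hle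

theorem exists_not_left_of_csInf_failSet_notMem (hI : I.OrdConnected) (hn : ¬Release P₁ P₂ I n)
    (hσ : sInf (failSet P₂ I n) ∉ failSet P₂ I n) {r : ℝ≥0} (hr : r ∈ I)
    (hσr : sInf (failSet P₂ I n) < r) :
    ∃ u, sInf (failSet P₂ I n) < u ∧ u ≤ r ∧ ¬P₁ (n + u) := by
  have hmem :=
    hI.csInf_mem_of_subset (OrderBot.bddBelow I) (fun s hs => hs.1) (failSet_nonempty hn)
  by_contra! h
  refine hn (Or.inr (Or.inr ⟨_, hmem, r, hr, hσr, fun s hs => ⟨fun hsσ => ?_, h s⟩⟩))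
  by_contra hP
  exact hσ (hsσ.antisymm (csInf_le (OrderBot.bddBelow _) ⟨hs, hP⟩) ▸ ⟨hs, hP⟩)

theorem false_of_third_clause_of_failSet_between (hI : I.OrdConnected)
    (hn : ¬Release P₁ P₂ I n)
    (hfail : ∀ u ∈ failSet P₂ I n, ∃ s ∈ I, sInf I < s ∧ x + s ≤ n + u ∧ ¬P₂ (x + s))
    (hP₁ : ∀ w, x < w → P₁ w → ∃ u ∈ failSet P₂ I n, n + u ≤ w)
    {t₁ t₂ : ℝ≥0} (ht₁ : t₁ ∈ I ∪ {sInf I}) (ht₂ : t₂ ∈ I) (hlt : t₁ < t₂)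
    (hclause : ∀ s ∈ I, (s ≤ t₁ → P₂ (x + s)) ∧ (t₁ < s → s ≤ t₂ → P₁ (x + s))) : False := by
  set F := failSet P₂ I n
  have hFne : F.Nonempty := failSet_nonempty hn
  have ht₁a : sInf I ≤ t₁ :=
    ht₁.elim (csInf_le (OrderBot.bddBelow I)) fun h => (eq_of_mem_singleton h).ge
  have hP₁_on : ∀ w, x + t₁ < w → w ≤ x + t₂ → P₁ w := by
    intro w h₁ h₂
    obtain ⟨s, rfl⟩ := exists_add_of_le (le_self_add.trans h₁.le)
    have hs₁ := lt_of_add_lt_add_left h₁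
    have hs₂ := le_of_add_le_add_left h₂
    exact (hclause s (hI.mem_of_csInf_lt_of_le (ht₁a.trans_lt hs₁) hs₂ ht₂)).2 hs₁ hs₂
  have hσt₁ : n + sInf F ≤ x + t₁ := by
    by_contra! h
    obtain ⟨v, hv₁, hv₂⟩ := exists_between (lt_min h (add_lt_add_right hlt x))
    obtain ⟨u, hu, huv⟩ :=
      hP₁ v (le_self_add.trans_lt hv₁) (hP₁_on v hv₁ (hv₂.trans_le (min_le_right _ _)).le)
    exact ((add_le_add_right (csInf_le (OrderBot.bddBelow F) hu) n).trans huv).not_gt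
      (hv₂.trans_le (min_le_left _ _))
  have hFt₁ : ∀ u ∈ F, x + t₁ < n + u := by
    intro u hu
    obtain ⟨s, hs, -, hsu, hs'⟩ := hfail u hu
    exact (add_lt_add_right (lt_of_not_ge fun h => hs' ((hclause s hs).1 h)) x).trans_le hsu
  -- so `n + sInf F = x + t₁` is not attained, and the third clause of `¬Release n` at `sInf F`
  -- yields a failure of `P₁` inside `(x + t₁, x + t₂]`
  have hσF : sInf F ∉ F := fun h => (hFt₁ _ h).not_ge hσt₁
  have ht₁σ : x + t₁ ≤ n + sInf F := not_lt.1 fun h =>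
    let ⟨u, hu, hlt⟩ := exists_add_lt_of_add_csInf_lt hFne h
    (hFt₁ u hu).asymm hlt
  obtain ⟨u, hu, hu₂⟩ :=
    exists_add_lt_of_add_csInf_lt hFne (hσt₁.trans_lt (add_lt_add_right hlt x))
  have hσu : sInf F < u := (csInf_le (OrderBot.bddBelow F) hu).lt_of_ne fun h => hσF (h ▸ hu)
  obtain ⟨v, hσv, hvu, hv⟩ := exists_not_left_of_csInf_failSet_notMem hI hn hσF hu.1 hσu
  exact hv (hP₁_on _ (ht₁σ.trans_lt (add_lt_add_right hσv n))
    ((add_le_add_right hvu n).trans hu₂.le))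

theorem not_release_of_failSet_between (hI : I.OrdConnected) (hn : ¬Release P₁ P₂ I n)
    (hfail : ∀ u ∈ failSet P₂ I n, ∃ s ∈ I, sInf I < s ∧ x + s ≤ n + u ∧ ¬P₂ (x + s))
    (hP₁ : ∀ w, x < w → P₁ w → ∃ u ∈ failSet P₂ I n, n + u ≤ w) : ¬Release P₁ P₂ I x := by
  rintro (hall | ⟨t₁, ht₁, ht₁P₁, hP₂⟩ | ⟨t₁, ht₁, t₂, ht₂, hlt, hclause⟩)
  · obtain ⟨u, hu⟩ := failSet_nonempty hn
    obtain ⟨s, hs, -, -, hs'⟩ := hfail u hu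
    exact hs' (hall s hs)
  · obtain ⟨u, hu, hle⟩ := hP₁ _ (lt_add_of_pos_right x ht₁) ht₁P₁
    obtain ⟨s, hs, has, hsu, hs'⟩ := hfail u hu
    exact hs' (hP₂ s ⟨⟨pos_of_gt has, le_of_add_le_add_left (hsu.trans hle)⟩, hs⟩)
  · exact false_of_third_clause_of_failSet_between hI hn hfail hP₁ ht₁ ht₂ hlt hclause

theorem add_csInf_failSet_notMem_Ioo (hI : I.OrdConnected) (hne : I.Nonempty)
    (hn : ¬Release P₁ P₂ I n) (hx : Release P₁ P₂ I x) (hP₁ : ∀ w, x < w → w ≤ n → ¬P₁ w) :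
    n + sInf (failSet P₂ I n) ∉ Ioo (x + sInf I) (x + sSup I) := by
  set F := failSet P₂ I n
  intro hσ
  refine not_release_of_failSet_between hI hn (fun u hu => ?_)
    (fun w hxw hw => exists_failSet_add_le hn (lt_of_not_ge fun hwn => hP₁ w hxw hwn hw) hw) hx
  obtain ⟨v, hv, hvu, hvb⟩ : ∃ v ∈ F, n + v ≤ n + u ∧ n + v < x + sSup I := by
    rcases lt_or_ge (n + u) (x + sSup I) with h | h
    · exact ⟨u, hu, le_rfl, h⟩
    · obtain ⟨v, hv, hlt⟩ := exists_add_lt_of_add_csInf_lt ⟨u, hu⟩ hσ.2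
      exact ⟨v, hv, hlt.le.trans h, hlt⟩
  obtain ⟨s, hs, has, hsv⟩ := exists_mem_add_eq hI hne
    ⟨hσ.1.trans_le (add_le_add_right (csInf_le (OrderBot.bddBelow F) hv) n), hvb⟩
  exact ⟨s, hs, has, hsv ▸ hvu, hsv ▸ hv.2⟩

theorem add_csInf_failSet_le_add_csInf (hI : I.OrdConnected) (hne : I.Nonempty)
    (hbdd : BddAbove I) (hn : ¬Release P₁ P₂ I n) (hx : Release P₁ P₂ I x) (hnx : n < x) :
    n + sInf (failSet P₂ I n) ≤ x + sInf I := by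
  obtain ⟨u, hu⟩ := failSet_nonempty hn
  have hσb : sInf (failSet P₂ I n) ≤ sSup I :=
    (csInf_le (OrderBot.bddBelow _) hu).trans (le_csSup hbdd hu.1)
  by_contra! h
  exact add_csInf_failSet_notMem_Ioo hI hne hn hx (fun w hxw hwn _ => (hnx.trans hxw).not_ge hwn)
    ⟨h, add_lt_add_of_lt_of_le hnx hσb⟩

theorem add_csSup_le_add_csInf_failSet (hI : I.OrdConnected) (hne : I.Nonempty)
    (hn : ¬Release P₁ P₂ I n) (hx : Release P₁ P₂ I x) (hxn : x < n)
    (hP₁ : ∀ w, x < w → w ≤ n → ¬P₁ w) :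
    x + sSup I ≤ n + sInf (failSet P₂ I n) := by
  have hσa : sInf I ≤ sInf (failSet P₂ I n) :=
    le_csInf (failSet_nonempty hn) fun u hu => csInf_le (OrderBot.bddBelow I) hu.1
  by_contra! h
  exact add_csInf_failSet_notMem_Ioo hI hne hn hx hP₁ ⟨add_lt_add_of_lt_of_le hxn hσa, h⟩

theorem step_le_csInf (I : Set ℝ≥0) : Step I ≤ sInf I := by
  unfold Step
  split_ifs with h
  exacts [h.le, le_rfl]

theorem step_le_csSup_sub_csInf (I : Set ℝ≥0) : Step I ≤ sSup I - sInf I := by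
  unfold Step
  split_ifs with h
  exacts [le_rfl, not_lt.1 h]

theorem not_release_of_alternation (hI : I.OrdConnected) (hne : I.Nonempty) (hbdd : BddAbove I)
    {n₁ x₂ n₂ x₃ : ℝ≥0} (h₁ : n₁ < x₂) (h₂ : x₂ < n₂) (h₃ : n₂ < x₃) (hx₃ : x₃ < Step I)
    (hn₁ : ¬Release P₁ P₂ I n₁) (hx₂ : Release P₁ P₂ I x₂) (hn₂ : ¬Release P₁ P₂ I n₂) :
    ¬Release P₁ P₂ I x₃ := by
  intro hx₃'
  have hn₂a : n₂ < sInf I := (h₃.trans hx₃).trans_le (step_le_csInf I)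
  have hP₁ : ∀ w, x₂ < w → w ≤ n₂ → ¬P₁ w := fun w hw hwn hw₁ =>
    (add_csInf_le_of_not_release hn₁ (h₁.trans hw) hw₁).not_gt
      ((hwn.trans_lt hn₂a).trans_le le_add_self)
  have hgap : x₂ + sSup I ≤ x₃ + sInf I :=
    (add_csSup_le_add_csInf_failSet hI hne hn₂ hx₂ h₂ hP₁).trans
      (add_csInf_failSet_le_add_csInf hI hne hbdd hn₂ hx₃' h₃)
  exact ((step_le_csSup_sub_csInf I).trans
    (tsub_le_iff_right.mpr (le_add_self.trans hgap))).not_gt hx₃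

end Release

theorem release_finitely_variable_general (f : Signal AP) (φ1 φ2 : MTL AP)
    (I : Set ℝ≥0) (hI : I.OrdConnected) (hne : I.Nonempty)
    (hbdd : BddAbove I) :
    ∃ T : Fin 4 → Set ℝ≥0,
      (∀ i, (T i).OrdConnected) ∧
      (∀ i j, i < j → ∀ ti ∈ T i, ∀ tj ∈ T j, ti < tj) ∧
      ∀ t : ℝ≥0,
        (t < Step I ∧ NSat (shift f t) (.release φ1 φ2 I)) ↔
          t ∈ T 0 ∪ T 1 ∪ T 2 ∪ T 3 := by
  set S := {t | t < Step I ∧ NSat (shift f t) (.release φ1 φ2 I)}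
  obtain ⟨A, B, hA, hB, hAB, hS⟩ := exists_ordConnected_union_of_no_alternation (S := S) <| by
    intro n₁ x₂ n₂ x₃ h₁ h₂ h₃ hx₂ hx₃
    by_contra! h
    simp only [S, mem_ofPred_eq, nsat_release_iff, not_and] at h hx₂ hx₃
    exact not_release_of_alternation hI hne hbdd h₁ h₂ h₃ hx₃.1 (h.1 (h₁.trans hx₂.1))
      hx₂.2 (h.2 (h₃.trans hx₃.1)) hx₃.2
  refine ⟨![A, B, ∅, ∅], ?_, ?_, fun t => ?_⟩
  · intro i
    fin_cases i <;> simp [hA, hB, ordConnected_empty]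
  · intro i j hij
    fin_cases i <;> fin_cases j <;> simp_all
  · change t ∈ S ↔ _
    simp [hS]

theorem release_finitely_variable (f : Signal AP) (φ1 φ2 : MTL AP)
    (I : Set ℝ≥0) (hI : I.OrdConnected) (hne : I.Nonempty)
    (hinf : 0 < sInf I) (hbdd : BddAbove I) :
    ∃ T : Fin 4 → Set ℝ≥0,
      (∀ i, (T i).OrdConnected) ∧
      (∀ i j, i < j → ∀ ti ∈ T i, ∀ tj ∈ T j, ti < tj) ∧
      ∀ t : ℝ≥0,
        (t < Step I ∧ NSat (shift f t) (.release φ1 φ2 I)) ↔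
          t ∈ T 0 ∪ T 1 ∪ T 2 ∪ T 3 :=
  release_finitely_variable_general f φ1 φ2 I hI hne hbdd

end MITL
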